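/- arXiv:2505.04971 — 3 statements merged into one kernel-verified Lean document; each statement's English description precedes it below -/
import Mathlib

section
/- Let $Y_0, Y_1$ be real-valued random variables on a probability space, and let $m \ge 1$. Then $\mathbb{E}[(Y_1 - Y_0)^m]$ equals the integral over $(y_1,\dots,y_m) \in \mathbb{R}^m$ of $\mathbb{P}(Y_0 < y_1 \le Y_1, \dots, Y_0 < y_m \le Y_1)$ plus $(-1)^m$ times the integral over $\mathbb{R}^m$ of $\mathbb{P}(Y_1 < y_1 \le Y_0, \dots, Y_1 < y_m \le Y_0)$, provided $\mathbb{E}|Y_1 - Y_0|^m < \infty$ and both integrals are finite. -/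
open MeasureTheory
open scoped ENNReal

lemma aux_lintegral {Ω : Type*} [MeasurableSpace Ω] (μ : Measure Ω) [IsProbabilityMeasure μ]
    (A B : Ω → ℝ) (hA : Measurable A) (hB : Measurable B) (m : ℕ) :
    ∫⁻ y : Fin m → ℝ, μ {ω | ∀ p, A ω < y p ∧ y p ≤ B ω} =
      ∫⁻ ω, ENNReal.ofReal (B ω - A ω) ^ m ∂μ := by
  set S : Set ((Fin m → ℝ) × Ω) := {p | ∀ i, A p.2 < p.1 i ∧ p.1 i ≤ B p.2} with hSdef
  have hS : MeasurableSet S := by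
    have : S = ⋂ i, ({p : (Fin m → ℝ) × Ω | A p.2 < p.1 i} ∩ {p | p.1 i ≤ B p.2}) := by
      ext p; simp [hSdef, forall_and]
    rw [this]
    exact MeasurableSet.iInter fun i =>
      (measurableSet_lt (hA.comp measurable_snd) measurable_fst.eval).inter
        (measurableSet_le measurable_fst.eval (hB.comp measurable_snd))
  calc ∫⁻ y : Fin m → ℝ, μ {ω | ∀ p, A ω < y p ∧ y p ≤ B ω}
      = ∫⁻ y : Fin m → ℝ, ∫⁻ ω, S.indicator 1 (y, ω) ∂μ := by
        refine lintegral_congr fun y => ?_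
        have hsec : MeasurableSet ((fun ω => (y, ω)) ⁻¹' S) :=
          hS.preimage measurable_prodMk_left
        have h2 : (fun ω => S.indicator 1 (y, ω)) =
            ((fun ω => (y, ω)) ⁻¹' S).indicator (1 : Ω → ℝ≥0∞) := by
          funext ω; simp [Set.indicator, Set.mem_preimage]
        rw [h2, lintegral_indicator_one hsec]
        rfl
    _ = ∫⁻ ω, ∫⁻ y : Fin m → ℝ, S.indicator 1 (y, ω) ∂(volume) ∂μ :=
        lintegral_lintegral_swap ((measurable_one.indicator hS).aemeasurable)
    _ = ∫⁻ ω, ENNReal.ofReal (B ω - A ω) ^ m ∂μ := by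
        refine lintegral_congr fun ω => ?_
        have h3 : (fun y : Fin m → ℝ => S.indicator 1 (y, ω)) =
            (Set.pi Set.univ fun _ : Fin m => Set.Ioc (A ω) (B ω)).indicator
              (1 : (Fin m → ℝ) → ℝ≥0∞) := by
          funext y; simp [Set.indicator, hSdef, Set.mem_pi, Set.mem_Ioc]
        rw [h3, lintegral_indicator_one (MeasurableSet.univ_pi fun _ => measurableSet_Ioc),
          volume_pi_pi]
        simp [Real.volume_Ioc]

lemma aux_meas {Ω : Type*} [MeasurableSpace Ω] (μ : Measure Ω) [IsProbabilityMeasure μ]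
    (A B : Ω → ℝ) (hA : Measurable A) (hB : Measurable B) (m : ℕ) :
    Measurable (fun y : Fin m → ℝ => μ {ω | ∀ p, A ω < y p ∧ y p ≤ B ω}) := by
  have hS : MeasurableSet {p : (Fin m → ℝ) × Ω | ∀ i, A p.2 < p.1 i ∧ p.1 i ≤ B p.2} := by
    have : {p : (Fin m → ℝ) × Ω | ∀ i, A p.2 < p.1 i ∧ p.1 i ≤ B p.2}
        = ⋂ i, ({p : (Fin m → ℝ) × Ω | A p.2 < p.1 i} ∩ {p | p.1 i ≤ B p.2}) := by
      ext p; simp [forall_and]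
    rw [this]
    exact MeasurableSet.iInter fun i =>
      (measurableSet_lt (hA.comp measurable_snd) measurable_fst.eval).inter
        (measurableSet_le measurable_fst.eval (hB.comp measurable_snd))
  exact measurable_measure_prodMk_left hS

lemma aux_integral {Ω : Type*} [MeasurableSpace Ω] (μ : Measure Ω) [IsProbabilityMeasure μ]
    (A B : Ω → ℝ) (hA : Measurable A) (hB : Measurable B) (m : ℕ) :
    ∫ y : Fin m → ℝ, (μ {ω | ∀ p, A ω < y p ∧ y p ≤ B ω}).toReal =
      ∫ ω, max (B ω - A ω) 0 ^ m ∂μ := by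
  rw [integral_toReal (aux_meas μ A B hA hB m).aemeasurable
    (Filter.Eventually.of_forall fun y => measure_lt_top μ _), aux_lintegral μ A B hA hB m]
  rw [integral_eq_lintegral_of_nonneg_ae (f := fun ω => max (B ω - A ω) 0 ^ m)
    (Filter.Eventually.of_forall fun ω => pow_nonneg (le_max_right _ _) m)
    (((hB.sub hA).max measurable_const).pow_const m).aestronglyMeasurable]
  congr 1
  refine lintegral_congr fun ω => ?_
  rw [ENNReal.ofReal_pow (le_max_right _ _)]
  congr 1
  rcases le_total (B ω - A ω) 0 with h | h
  · simp [max_eq_right h, ENNReal.ofReal_eq_zero.mpr h]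
  · simp [max_eq_left h]

theorem moment_of_causal_effect_integral_repr
    {Ω : Type*} [MeasurableSpace Ω] (μ : Measure Ω) [IsProbabilityMeasure μ]
    (Y₀ Y₁ : Ω → ℝ) (hY₀ : Measurable Y₀) (hY₁ : Measurable Y₁)
    (m : ℕ) (hm : 1 ≤ m)
    (hint : Integrable (fun ω => |Y₁ ω - Y₀ ω| ^ m) μ)
    (hint₁ : Integrable
      (fun y : Fin m → ℝ => (μ {ω | ∀ p, Y₀ ω < y p ∧ y p ≤ Y₁ ω}).toReal))
    (hint₂ : Integrable
      (fun y : Fin m → ℝ => (μ {ω | ∀ p, Y₁ ω < y p ∧ y p ≤ Y₀ ω}).toReal)) :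
    ∫ ω, (Y₁ ω - Y₀ ω) ^ m ∂μ =
      (∫ y : Fin m → ℝ, (μ {ω | ∀ p, Y₀ ω < y p ∧ y p ≤ Y₁ ω}).toReal)
        + (-1 : ℝ) ^ m *
          ∫ y : Fin m → ℝ, (μ {ω | ∀ p, Y₁ ω < y p ∧ y p ≤ Y₀ ω}).toReal := by
  rw [aux_integral μ Y₀ Y₁ hY₀ hY₁ m, aux_integral μ Y₁ Y₀ hY₁ hY₀ m]
  have hb : ∀ x : ℝ, |max x 0| ≤ |x| := fun x => by
    rcases le_total x 0 with h | h
    · simp [max_eq_right h]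
    · simp [max_eq_left h]
  have hbd : ∀ x : ℝ, ‖max x 0 ^ m‖ ≤ ‖|x| ^ m‖ := fun x => by
    simp only [Real.norm_eq_abs, abs_pow, abs_abs]
    exact pow_le_pow_left₀ (abs_nonneg _) (hb x) m
  have hf : Integrable (fun ω => max (Y₁ ω - Y₀ ω) 0 ^ m) μ :=
    hint.mono ((((hY₁.sub hY₀).max measurable_const).pow_const m).aestronglyMeasurable)
      (Filter.Eventually.of_forall fun ω => hbd _)
  have hg : Integrable (fun ω => max (Y₀ ω - Y₁ ω) 0 ^ m) μ := by
    refine hint.mono ((((hY₀.sub hY₁).max measurable_const).pow_const m).aestronglyMeasurable)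
      (Filter.Eventually.of_forall fun ω => ?_)
    calc ‖max (Y₀ ω - Y₁ ω) 0 ^ m‖ ≤ ‖|Y₀ ω - Y₁ ω| ^ m‖ := hbd _
      _ = ‖|Y₁ ω - Y₀ ω| ^ m‖ := by rw [abs_sub_comm]
  have key : ∀ ω, (Y₁ ω - Y₀ ω) ^ m =
      max (Y₁ ω - Y₀ ω) 0 ^ m + (-1 : ℝ) ^ m * max (Y₀ ω - Y₁ ω) 0 ^ m := by
    intro ω
    rcases le_total (Y₀ ω) (Y₁ ω) with h | h
    · rw [max_eq_left (by linarith), max_eq_right (by linarith),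
        zero_pow (by omega : m ≠ 0)]
      ring
    · rw [max_eq_right (by linarith), max_eq_left (by linarith),
        zero_pow (by omega : m ≠ 0), ← neg_pow, neg_sub]
      ring
  simp_rw [key]
  rw [integral_add hf (hg.const_mul _), MeasureTheory.integral_const_mul]
end

section
/- Let $Y_0, Y_1$ be real random variables with $\mathbb{E}|Y_1-Y_0|^m < \infty$ for an odd integer $m \ge 1$. Then $\int_{\mathbb{R}^m} l(y; 1, 0)\,dy - \int_{\mathbb{R}^m} u(y; 0, 1)\,dy \le \mathbb{E}[(Y_1 - Y_0)^m] \le \int_{\mathbb{R}^m} u(y; 1, 0)\,dy - \int_{\mathbb{R}^m} l(y; 0, 1)\,dy$, where $l(y_1,\dots,y_m; i, j) = \max\{\sum_p \mathbb{P}(Y_j < y_p) - \sum_p \mathbb{P}(Y_i < y_p) - m + 1,\, 0\}$ and $u(y_1,\dots,y_m; i, j) = \min\{\min_p \mathbb{P}(Y_j < y_p),\, 1 - \max_p \mathbb{P}(Y_i < y_p)\}$, provided the relevant integrals are finite. -/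
open MeasureTheory

section Aux

variable {Ω : Type*} [MeasurableSpace Ω]

private lemma measS (Y Z : Ω → ℝ) (hY : Measurable Y) (hZ : Measurable Z) (m : ℕ) :
    MeasurableSet {p : (Fin m → ℝ) × Ω | ∀ i, Y p.2 < p.1 i ∧ p.1 i ≤ Z p.2} := by
  have h : {p : (Fin m → ℝ) × Ω | ∀ i, Y p.2 < p.1 i ∧ p.1 i ≤ Z p.2}
      = ⋂ i, ({p : (Fin m → ℝ) × Ω | Y p.2 < p.1 i} ∩ {p | p.1 i ≤ Z p.2}) := by
    ext p
    simp [Set.mem_iInter, forall_and]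
  rw [h]
  exact MeasurableSet.iInter fun i =>
    (measurableSet_lt (hY.comp measurable_snd) (measurable_fst.eval)).inter
      (measurableSet_le (measurable_fst.eval) (hZ.comp measurable_snd))

private lemma sec_meas (μ : Measure Ω) [IsProbabilityMeasure μ] (Y Z : Ω → ℝ)
    (hY : Measurable Y) (hZ : Measurable Z) (m : ℕ) :
    Measurable fun y : Fin m → ℝ => μ {ω | ∀ i, Y ω < y i ∧ y i ≤ Z ω} :=
  measurable_measure_prodMk_left (measS Y Z hY hZ m)

private lemma lint_sec (μ : Measure Ω) [IsProbabilityMeasure μ] (Y Z : Ω → ℝ)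
    (hY : Measurable Y) (hZ : Measurable Z) (m : ℕ) :
    ∫⁻ y : Fin m → ℝ, μ {ω | ∀ i, Y ω < y i ∧ y i ≤ Z ω}
      = ∫⁻ ω, ENNReal.ofReal (Z ω - Y ω) ^ m ∂μ := by
  have hS := measS Y Z hY hZ m
  have h1 := Measure.prod_apply (μ := (volume : Measure (Fin m → ℝ))) (ν := μ) hS
  have h2 := Measure.prod_apply_symm (μ := (volume : Measure (Fin m → ℝ))) (ν := μ) hS
  have e1 : ∫⁻ y : Fin m → ℝ, μ {ω | ∀ i, Y ω < y i ∧ y i ≤ Z ω}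
      = ∫⁻ y : Fin m → ℝ,
          μ (Prod.mk y ⁻¹' {p : (Fin m → ℝ) × Ω | ∀ i, Y p.2 < p.1 i ∧ p.1 i ≤ Z p.2}) := rfl
  rw [e1, ← h1, h2]
  refine lintegral_congr fun ω => ?_
  have h3 : ((fun y : Fin m → ℝ => (y, ω)) ⁻¹'
        {p : (Fin m → ℝ) × Ω | ∀ i, Y p.2 < p.1 i ∧ p.1 i ≤ Z p.2})
      = Set.univ.pi (fun _ : Fin m => Set.Ioc (Y ω) (Z ω)) := by
    ext y
    simp [Set.mem_pi, Set.mem_Ioc]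
  rw [h3, volume_pi_pi, Real.volume_Ioc, Finset.prod_const, Finset.card_univ, Fintype.card_fin]

private lemma pointwise_bounds (μ : Measure Ω) [IsProbabilityMeasure μ] (Y Z : Ω → ℝ)
    (hY : Measurable Y) (hZ : Measurable Z) {m : ℕ} (hm : 1 ≤ m) (y : Fin m → ℝ) :
    max ((∑ p, (μ {ω | Y ω < y p}).toReal) - (∑ p, (μ {ω | Z ω < y p}).toReal)
        - (m : ℝ) + 1) 0
      ≤ (μ {ω | ∀ i, Y ω < y i ∧ y i ≤ Z ω}).toReal ∧
    (μ {ω | ∀ i, Y ω < y i ∧ y i ≤ Z ω}).toReal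
      ≤ min (⨅ p, (μ {ω | Y ω < y p}).toReal) (1 - ⨆ p, (μ {ω | Z ω < y p}).toReal) := by
  have hne : Nonempty (Fin m) := ⟨⟨0, hm⟩⟩
  set S := {ω | ∀ i, Y ω < y i ∧ y i ≤ Z ω} with hSdef
  have hSm : MeasurableSet S := by
    have h : S = ⋂ i, ({ω | Y ω < y i} ∩ {ω | y i ≤ Z ω}) := by
      ext ω; simp [hSdef, Set.mem_iInter, forall_and]
    rw [h]
    exact MeasurableSet.iInter fun i =>
      (measurableSet_lt hY measurable_const).inter (measurableSet_le measurable_const hZ)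
  have hZc : ∀ i : Fin m, (μ ({ω | Z ω < y i}ᶜ)).toReal = 1 - (μ {ω | Z ω < y i}).toReal := by
    intro i
    rw [prob_compl_eq_one_sub (measurableSet_lt hZ measurable_const),
      ENNReal.toReal_sub_of_le prob_le_one ENNReal.one_ne_top, ENNReal.toReal_one]
  have hYc : ∀ i : Fin m, (μ ({ω | Y ω < y i}ᶜ)).toReal = 1 - (μ {ω | Y ω < y i}).toReal := by
    intro i
    rw [prob_compl_eq_one_sub (measurableSet_lt hY measurable_const),
      ENNReal.toReal_sub_of_le prob_le_one ENNReal.one_ne_top, ENNReal.toReal_one]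
  constructor
  · -- lower bound (Fréchet)
    have hcompl : Sᶜ = ⋃ i, ({ω | Y ω < y i}ᶜ ∪ {ω | Z ω < y i}) := by
      ext ω
      simp only [hSdef, Set.mem_compl_iff, Set.mem_setOf_eq, Set.mem_iUnion, Set.mem_union,
        not_forall, not_and_or, not_lt, not_le]
    have hle : μ Sᶜ ≤ ∑ i, (μ ({ω | Y ω < y i}ᶜ) + μ {ω | Z ω < y i}) := by
      rw [hcompl]
      exact le_trans (measure_iUnion_fintype_le μ _)
        (Finset.sum_le_sum fun i _ => measure_union_le _ _)
    have hfin : (∑ i, (μ ({ω | Y ω < y i}ᶜ) + μ {ω | Z ω < y i})) ≠ ⊤ := by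
      refine (ENNReal.sum_lt_top.2 fun i _ => ?_).ne
      exact ENNReal.add_lt_top.2 ⟨measure_lt_top μ _, measure_lt_top μ _⟩
    have h1 : (μ Sᶜ).toReal
        ≤ ∑ i, ((1 - (μ {ω | Y ω < y i}).toReal) + (μ {ω | Z ω < y i}).toReal) := by
      refine le_trans (ENNReal.toReal_mono hfin hle) (le_of_eq ?_)
      rw [ENNReal.toReal_sum (fun i _ => by
        exact (ENNReal.add_lt_top.2 ⟨measure_lt_top μ _, measure_lt_top μ _⟩).ne)]
      refine Finset.sum_congr rfl fun i _ => ?_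
      rw [ENNReal.toReal_add (measure_ne_top μ _) (measure_ne_top μ _), hYc i]
    have h2 : (μ Sᶜ).toReal = 1 - (μ S).toReal := by
      rw [prob_compl_eq_one_sub hSm,
        ENNReal.toReal_sub_of_le prob_le_one ENNReal.one_ne_top, ENNReal.toReal_one]
    have h3 : ∑ i, ((1 - (μ {ω | Y ω < y i}).toReal) + (μ {ω | Z ω < y i}).toReal)
        = (m : ℝ) - (∑ p, (μ {ω | Y ω < y p}).toReal) + (∑ p, (μ {ω | Z ω < y p}).toReal) := by
      rw [Finset.sum_add_distrib, Finset.sum_sub_distrib]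
      simp [Finset.card_univ]
    refine max_le (by rw [h2] at h1; linarith [h1, h3.symm ▸ h1]) ENNReal.toReal_nonneg
  · -- upper bound
    refine le_min (le_ciInf fun p => ?_) ?_
    · exact ENNReal.toReal_mono (measure_ne_top μ _)
        (measure_mono fun ω hω => (hω p).1)
    · have h : ∀ p : Fin m, (μ {ω | Z ω < y p}).toReal ≤ 1 - (μ S).toReal := by
        intro p
        have hsub : S ⊆ {ω | Z ω < y p}ᶜ := fun ω hω => not_lt.2 (hω p).2
        have := ENNReal.toReal_mono (measure_ne_top μ _) (measure_mono hsub)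
        rw [hZc p] at this
        linarith
      have := ciSup_le h
      linarith
end Aux

theorem bounds_odd_moment_causal_effect
    {Ω : Type*} [MeasurableSpace Ω] (μ : Measure Ω) [IsProbabilityMeasure μ]
    (Y₀ Y₁ : Ω → ℝ) (hY₀ : Measurable Y₀) (hY₁ : Measurable Y₁)
    (m : ℕ) (hm : 1 ≤ m) (hOdd : Odd m)
    (hint : Integrable (fun ω => |Y₁ ω - Y₀ ω| ^ m) μ)
    (hu10 : Integrable (fun y : Fin m → ℝ =>
      min (⨅ p, (μ {ω | Y₀ ω < y p}).toReal) (1 - ⨆ p, (μ {ω | Y₁ ω < y p}).toReal)))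
    (hu01 : Integrable (fun y : Fin m → ℝ =>
      min (⨅ p, (μ {ω | Y₁ ω < y p}).toReal) (1 - ⨆ p, (μ {ω | Y₀ ω < y p}).toReal)))
    (hl10 : Integrable (fun y : Fin m → ℝ =>
      max ((∑ p, (μ {ω | Y₀ ω < y p}).toReal) - (∑ p, (μ {ω | Y₁ ω < y p}).toReal)
        - (m : ℝ) + 1) 0))
    (hl01 : Integrable (fun y : Fin m → ℝ =>
      max ((∑ p, (μ {ω | Y₁ ω < y p}).toReal) - (∑ p, (μ {ω | Y₀ ω < y p}).toReal)
        - (m : ℝ) + 1) 0)) :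
    (∫ y : Fin m → ℝ,
        max ((∑ p, (μ {ω | Y₀ ω < y p}).toReal) - (∑ p, (μ {ω | Y₁ ω < y p}).toReal)
          - (m : ℝ) + 1) 0)
      - (∫ y : Fin m → ℝ,
        min (⨅ p, (μ {ω | Y₁ ω < y p}).toReal) (1 - ⨆ p, (μ {ω | Y₀ ω < y p}).toReal))
      ≤ ∫ ω, (Y₁ ω - Y₀ ω) ^ m ∂μ ∧
    (∫ ω, (Y₁ ω - Y₀ ω) ^ m ∂μ) ≤
      (∫ y : Fin m → ℝ,
        min (⨅ p, (μ {ω | Y₀ ω < y p}).toReal) (1 - ⨆ p, (μ {ω | Y₁ ω < y p}).toReal))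
      - ∫ y : Fin m → ℝ,
        max ((∑ p, (μ {ω | Y₁ ω < y p}).toReal) - (∑ p, (μ {ω | Y₀ ω < y p}).toReal)
          - (m : ℝ) + 1) 0 := by
  -- the two "joint" functions
  set g₁ : (Fin m → ℝ) → ENNReal := fun y => μ {ω | ∀ i, Y₀ ω < y i ∧ y i ≤ Y₁ ω} with hg₁def
  set g₀ : (Fin m → ℝ) → ENNReal := fun y => μ {ω | ∀ i, Y₁ ω < y i ∧ y i ≤ Y₀ ω} with hg₀def
  have hmeas₁ : Measurable g₁ := sec_meas μ Y₀ Y₁ hY₀ hY₁ m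
  have hmeas₀ : Measurable g₀ := sec_meas μ Y₁ Y₀ hY₁ hY₀ m
  have hlint₁ : ∫⁻ y, g₁ y = ∫⁻ ω, ENNReal.ofReal (Y₁ ω - Y₀ ω) ^ m ∂μ :=
    lint_sec μ Y₀ Y₁ hY₀ hY₁ m
  have hlint₀ : ∫⁻ y, g₀ y = ∫⁻ ω, ENNReal.ofReal (Y₀ ω - Y₁ ω) ^ m ∂μ :=
    lint_sec μ Y₁ Y₀ hY₁ hY₀ m
  -- finiteness
  have hbd : ∀ a : ℝ, ENNReal.ofReal a ^ m ≤ (‖|a| ^ m‖₊ : ENNReal) := by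
    intro a
    rw [← enorm_eq_nnnorm, Real.enorm_eq_ofReal (by positivity), ENNReal.ofReal_pow (abs_nonneg a)]
    exact pow_le_pow_left₀ zero_le (ENNReal.ofReal_le_ofReal (le_abs_self a)) m
  have hfin₁ : ∫⁻ ω, ENNReal.ofReal (Y₁ ω - Y₀ ω) ^ m ∂μ ≠ ⊤ := by
    refine (lt_of_le_of_lt (lintegral_mono fun ω => hbd _) ?_).ne
    exact hint.2
  have hfin₀ : ∫⁻ ω, ENNReal.ofReal (Y₀ ω - Y₁ ω) ^ m ∂μ ≠ ⊤ := by
    refine (lt_of_le_of_lt (lintegral_mono fun ω => ?_) hint.2).ne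
    have := hbd (Y₀ ω - Y₁ ω)
    rwa [abs_sub_comm] at this
  have hm₁ : Measurable fun ω => ENNReal.ofReal (Y₁ ω - Y₀ ω) ^ m :=
    ((hY₁.sub hY₀).ennreal_ofReal).pow_const m
  have hm₀ : Measurable fun ω => ENNReal.ofReal (Y₀ ω - Y₁ ω) ^ m :=
    ((hY₀.sub hY₁).ennreal_ofReal).pow_const m
  -- the odd moment identity
  have hE : ∫ ω, (Y₁ ω - Y₀ ω) ^ m ∂μ
      = (∫⁻ ω, ENNReal.ofReal (Y₁ ω - Y₀ ω) ^ m ∂μ).toReal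
        - (∫⁻ ω, ENNReal.ofReal (Y₀ ω - Y₁ ω) ^ m ∂μ).toReal := by
    have hi₁ : Integrable (fun ω => (ENNReal.ofReal (Y₁ ω - Y₀ ω) ^ m).toReal) μ :=
      integrable_toReal_of_lintegral_ne_top hm₁.aemeasurable hfin₁
    have hi₀ : Integrable (fun ω => (ENNReal.ofReal (Y₀ ω - Y₁ ω) ^ m).toReal) μ :=
      integrable_toReal_of_lintegral_ne_top hm₀.aemeasurable hfin₀
    have key : (fun ω => (Y₁ ω - Y₀ ω) ^ m)
        = fun ω => (ENNReal.ofReal (Y₁ ω - Y₀ ω) ^ m).toReal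
          - (ENNReal.ofReal (Y₀ ω - Y₁ ω) ^ m).toReal := by
      funext ω
      rcases le_total (Y₀ ω) (Y₁ ω) with h | h
      · have e0 : ENNReal.ofReal (Y₀ ω - Y₁ ω) = 0 := ENNReal.ofReal_of_nonpos (by linarith)
        rw [e0, zero_pow (by omega : m ≠ 0), ENNReal.toReal_zero, sub_zero,
          ENNReal.toReal_pow, ENNReal.toReal_ofReal (by linarith)]
      · have e0 : ENNReal.ofReal (Y₁ ω - Y₀ ω) = 0 := ENNReal.ofReal_of_nonpos (by linarith)
        rw [e0, zero_pow (by omega : m ≠ 0), ENNReal.toReal_zero, zero_sub,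
          ENNReal.toReal_pow, ENNReal.toReal_ofReal (by linarith)]
        have e : Y₁ ω - Y₀ ω = -(Y₀ ω - Y₁ ω) := by ring
        rw [e, hOdd.neg_pow]
    rw [key, integral_sub hi₁ hi₀,
      integral_toReal hm₁.aemeasurable
        (Filter.Eventually.of_forall fun ω => ENNReal.pow_lt_top ENNReal.ofReal_lt_top),
      integral_toReal hm₀.aemeasurable
        (Filter.Eventually.of_forall fun ω => ENNReal.pow_lt_top ENNReal.ofReal_lt_top)]
  -- real-valued section integrals
  have hg₁int : Integrable (fun y => (g₁ y).toReal) (volume : Measure (Fin m → ℝ)) :=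
    integrable_toReal_of_lintegral_ne_top hmeas₁.aemeasurable (hlint₁ ▸ hfin₁)
  have hg₀int : Integrable (fun y => (g₀ y).toReal) (volume : Measure (Fin m → ℝ)) :=
    integrable_toReal_of_lintegral_ne_top hmeas₀.aemeasurable (hlint₀ ▸ hfin₀)
  have hg₁eq : ∫ y, (g₁ y).toReal = (∫⁻ y, g₁ y).toReal :=
    integral_toReal hmeas₁.aemeasurable
      (Filter.Eventually.of_forall fun y => lt_of_le_of_lt prob_le_one ENNReal.one_lt_top)
  have hg₀eq : ∫ y, (g₀ y).toReal = (∫⁻ y, g₀ y).toReal :=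
    integral_toReal hmeas₀.aemeasurable
      (Filter.Eventually.of_forall fun y => lt_of_le_of_lt prob_le_one ENNReal.one_lt_top)
  have hE' : ∫ ω, (Y₁ ω - Y₀ ω) ^ m ∂μ
      = (∫ y, (g₁ y).toReal) - (∫ y, (g₀ y).toReal) := by
    rw [hE, hg₁eq, hg₀eq, hlint₁, hlint₀]
  -- pointwise Fréchet bounds
  have hb₁ := fun y : Fin m → ℝ => pointwise_bounds μ Y₀ Y₁ hY₀ hY₁ hm y
  have hb₀ := fun y : Fin m → ℝ => pointwise_bounds μ Y₁ Y₀ hY₁ hY₀ hm y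
  have hI1 : (∫ y : Fin m → ℝ,
        max ((∑ p, (μ {ω | Y₀ ω < y p}).toReal) - (∑ p, (μ {ω | Y₁ ω < y p}).toReal)
          - (m : ℝ) + 1) 0) ≤ ∫ y, (g₁ y).toReal :=
    integral_mono hl10 hg₁int fun y => (hb₁ y).1
  have hI2 : ∫ y, (g₁ y).toReal ≤ ∫ y : Fin m → ℝ,
        min (⨅ p, (μ {ω | Y₀ ω < y p}).toReal) (1 - ⨆ p, (μ {ω | Y₁ ω < y p}).toReal) :=
    integral_mono hg₁int hu10 fun y => (hb₁ y).2
  have hI3 : (∫ y : Fin m → ℝ,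
        max ((∑ p, (μ {ω | Y₁ ω < y p}).toReal) - (∑ p, (μ {ω | Y₀ ω < y p}).toReal)
          - (m : ℝ) + 1) 0) ≤ ∫ y, (g₀ y).toReal :=
    integral_mono hl01 hg₀int fun y => (hb₀ y).1
  have hI4 : ∫ y, (g₀ y).toReal ≤ ∫ y : Fin m → ℝ,
        min (⨅ p, (μ {ω | Y₁ ω < y p}).toReal) (1 - ⨆ p, (μ {ω | Y₀ ω < y p}).toReal) :=
    integral_mono hg₀int hu01 fun y => (hb₀ y).2
  constructor
  · rw [hE']; linarith
  · rw [hE']; linarith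
end

section
/- Let $Y_0, Y_1$ be real random variables, and suppose there is a real random variable $U$ with a continuous strictly increasing CDF and functions $f_0, f_1 : \mathbb{R} \to \mathbb{R}$, both strictly increasing and continuous, with $Y_0 = f_0(U)$ and $Y_1 = f_1(U)$ almost surely. Then for any $y_1, \dots, y_m \in \mathbb{R}$, $\mathbb{P}(Y_0 < y_1 \le Y_1, \dots, Y_0 < y_m \le Y_1) = \max\{\min_{p=1,\dots,m} \mathbb{P}(Y_0 < y_p) - \max_{p=1,\dots,m} \mathbb{P}(Y_1 < y_p),\; 0\}$. -/
open MeasureTheory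

theorem identification_under_comonotonicity
    {Ω : Type*} [MeasurableSpace Ω] (μ : Measure Ω) [IsProbabilityMeasure μ]
    (U : Ω → ℝ) (hU : Measurable U)
    (hFcont : Continuous (fun u : ℝ => (μ {ω | U ω ≤ u}).toReal))
    (hFmono : StrictMono (fun u : ℝ => (μ {ω | U ω ≤ u}).toReal))
    (f₀ f₁ : ℝ → ℝ)
    (hf₀mono : StrictMono f₀) (hf₀cont : Continuous f₀)
    (hf₁mono : StrictMono f₁) (hf₁cont : Continuous f₁)
    (Y₀ Y₁ : Ω → ℝ) (hY₀ : Measurable Y₀) (hY₁ : Measurable Y₁)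
    (hY₀eq : ∀ᵐ ω ∂μ, Y₀ ω = f₀ (U ω)) (hY₁eq : ∀ᵐ ω ∂μ, Y₁ ω = f₁ (U ω))
    (m : ℕ) (hm : 1 ≤ m) (y : Fin m → ℝ) :
    (μ {ω | ∀ p, Y₀ ω < y p ∧ y p ≤ Y₁ ω}).toReal =
      max ((⨅ p, (μ {ω | Y₀ ω < y p}).toReal) - (⨆ p, (μ {ω | Y₁ ω < y p}).toReal)) 0 := by
  have : Nonempty (Fin m) := ⟨⟨0, hm⟩⟩
  obtain ⟨p0, hp0⟩ : ∃ p0, ∀ p, y p0 ≤ y p := Finite.exists_min y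
  obtain ⟨p1, hp1⟩ : ∃ p1, ∀ p, y p ≤ y p1 := Finite.exists_max y
  set A : Set Ω := {ω | f₀ (U ω) < y p0} with hA
  set B : Set Ω := {ω | f₁ (U ω) < y p1} with hB
  have hAm : MeasurableSet A :=
    measurableSet_lt (hf₀mono.monotone.measurable.comp hU) measurable_const
  have hBm : MeasurableSet B :=
    measurableSet_lt (hf₁mono.monotone.measurable.comp hU) measurable_const
  -- LHS set is a.e. equal to A ∩ Bᶜ
  have h1 : μ {ω | ∀ p, Y₀ ω < y p ∧ y p ≤ Y₁ ω} = μ (A ∩ Bᶜ) := by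
    apply measure_congr
    filter_upwards [hY₀eq, hY₁eq] with ω h0 h1'
    have key : (∀ p, Y₀ ω < y p ∧ y p ≤ Y₁ ω) ↔ (ω ∈ A ∩ Bᶜ) := by
      constructor
      · intro h
        refine ⟨?_, ?_⟩
        · show f₀ (U ω) < y p0
          rw [← h0]; exact (h p0).1
        · show ¬ f₁ (U ω) < y p1
          rw [← h1']; exact not_lt.mpr (h p1).2
      · rintro ⟨ha, hb⟩ p
        have ha' : f₀ (U ω) < y p0 := ha
        have hb' : ¬ f₁ (U ω) < y p1 := hb
        rw [h0, h1']
        exact ⟨lt_of_lt_of_le ha' (hp0 p), le_trans (hp1 p) (not_lt.mp hb')⟩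
    exact eq_iff_iff.mpr key
  -- each event measure equals the f∘U version
  have h0p : ∀ p, μ {ω | Y₀ ω < y p} = μ {ω | f₀ (U ω) < y p} := by
    intro p; apply measure_congr
    filter_upwards [hY₀eq] with ω h0
    exact eq_iff_iff.mpr (by show Y₀ ω < y p ↔ f₀ (U ω) < y p; rw [h0])
  have h1p : ∀ p, μ {ω | Y₁ ω < y p} = μ {ω | f₁ (U ω) < y p} := by
    intro p; apply measure_congr
    filter_upwards [hY₁eq] with ω h1'
    exact eq_iff_iff.mpr (by show Y₁ ω < y p ↔ f₁ (U ω) < y p; rw [h1'])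
  have hfin : ∀ s : Set Ω, μ s ≠ ⊤ := fun s => measure_ne_top μ s
  -- infimum equals μ A
  have hinf : (⨅ p, (μ {ω | Y₀ ω < y p}).toReal) = (μ A).toReal := by
    apply le_antisymm
    · have := ciInf_le (f := fun p => (μ {ω | Y₀ ω < y p}).toReal)
        ⟨0, fun x ⟨p, hp⟩ => hp ▸ ENNReal.toReal_nonneg⟩ p0
      simpa [h0p p0] using this
    · apply le_ciInf
      intro p
      rw [h0p p]
      apply ENNReal.toReal_le_toReal (hfin _) (hfin _) |>.mpr
      · apply measure_mono
        intro ω hω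
        exact lt_of_lt_of_le hω (hp0 p)
  -- supremum equals μ B
  have hsup : (⨆ p, (μ {ω | Y₁ ω < y p}).toReal) = (μ B).toReal := by
    apply le_antisymm
    · apply ciSup_le
      intro p
      rw [h1p p]
      apply ENNReal.toReal_le_toReal (hfin _) (hfin _) |>.mpr
      apply measure_mono
      intro ω hω
      exact lt_of_lt_of_le hω (hp1 p)
    · have := le_ciSup (f := fun p => (μ {ω | Y₁ ω < y p}).toReal)
        (Finite.bddAbove_range _) p1
      simpa [h1p p1] using this
  rw [h1, hinf, hsup]
  -- A and B are preimages of lower sets, hence comparable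
  have hAlow : IsLowerSet {u : ℝ | f₀ u < y p0} := by
    intro a b hba ha
    exact lt_of_le_of_lt (hf₀mono.monotone hba) ha
  have hBlow : IsLowerSet {u : ℝ | f₁ u < y p1} := by
    intro a b hba ha
    exact lt_of_le_of_lt (hf₁mono.monotone hba) ha
  have hAB : A ⊆ B ∨ B ⊆ A := by
    rcases hAlow.total hBlow with h | h
    · left; exact fun ω hω => h hω
    · right; exact fun ω hω => h hω
  rcases hAB with h | h
  · -- A ⊆ B : intersection empty, RHS difference ≤ 0
    have hempty : A ∩ Bᶜ = ∅ := by
      ext ω; simp only [Set.mem_inter_iff, Set.mem_compl_iff, Set.mem_empty_iff_false, iff_false]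
      rintro ⟨ha, hb⟩; exact hb (h ha)
    have hle : (μ A).toReal ≤ (μ B).toReal :=
      ENNReal.toReal_le_toReal (hfin _) (hfin _) |>.mpr (measure_mono h)
    rw [hempty]
    simp [max_eq_right (sub_nonpos.mpr hle)]
  · -- B ⊆ A
    have hdiff : A ∩ Bᶜ = A \ B := rfl
    rw [hdiff, measure_diff h hBm.nullMeasurableSet (hfin _)]
    have hle : μ B ≤ μ A := measure_mono h
    rw [ENNReal.toReal_sub_of_le hle (hfin _)]
    rw [max_eq_left (sub_nonneg.mpr (ENNReal.toReal_le_toReal (hfin _) (hfin _) |>.mpr hle))]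
end
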